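/- arXiv:1006.0638 — 11 statements merged into one kernel-verified Lean document; each statement's English description precedes it below -/
import Mathlib

section
/- For every integer m ≥ 1, the polynomial g_{(0,m)} = x_m² + 2·∑_{j=1}^{m-1} (−1)^j x_{m−j} x_{m+j} lies in the kernel of the derivation d, i.e. d(g_{(0,m)}) = 0. -/
open MvPolynomial Finset

/-- `x i` models the variable `xᵢ` (for `i ≥ 1`) of `A = ℂ[x₁, x₂, …]`. -/
noncomputable def x (i : ℕ) : MvPolynomial ℕ ℂ := X (i - 1)

/-- For m ≥ 1, the polynomial g_{(0,m)} = x_m^2 + 2 ∑_{j=1}^{m-1} (-1)^j x_{m-j} x_{m+j} lies in ker d. -/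
theorem d_g_zero_m_eq_zero (d : Derivation ℂ (MvPolynomial ℕ ℂ) (MvPolynomial ℕ ℂ))
    (h1 : d (x 1) = 0) (h : ∀ i, 2 ≤ i → d (x i) = x (i - 1))
    (m : ℕ) (hm : 1 ≤ m) :
    d (x m ^ 2 + 2 * ∑ j ∈ Finset.Ico 1 m,
        (-1 : MvPolynomial ℕ ℂ) ^ j * (x (m - j) * x (m + j))) = 0 := by
  classical
  have hC : ∀ c : ℂ, d (C c : MvPolynomial ℕ ℂ) = 0 := fun c => by
    simp only [← MvPolynomial.algebraMap_eq]; exact d.map_algebraMap c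
  have hnegd : ∀ j : ℕ, d ((-1 : MvPolynomial ℕ ℂ) ^ j) = 0 := fun j => by
    have e : ((-1 : MvPolynomial ℕ ℂ)) ^ j = C ((-1 : ℂ) ^ j) := by simp
    rw [e, hC]
  rcases eq_or_lt_of_le hm with h1m | h2m
  · -- m = 1
    subst h1m
    simp only [Finset.Ico_self, Finset.sum_empty, mul_zero, add_zero, sq]
    rw [Derivation.leibniz, h1]
    simp
  · -- 2 ≤ m
    have h2m : 2 ≤ m := h2m
    set b : ℕ → MvPolynomial ℕ ℂ := fun j => (-1) ^ j * (x (m - j) * x (m + j - 1)) with hb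
    have hdsq : d (x m ^ 2) = 2 * (x m * x (m - 1)) := by
      rw [sq, Derivation.leibniz, h m h2m]
      simp only [smul_eq_mul]
      ring
    have hterm : ∀ j ∈ Finset.Ico 1 (m - 1),
        d ((-1 : MvPolynomial ℕ ℂ) ^ j * (x (m - j) * x (m + j))) = b j - b (j + 1) := by
      intro j hj
      simp only [Finset.mem_Ico] at hj
      have hmj2 : 2 ≤ m - j := by omega
      have hmj2' : 2 ≤ m + j := by omega
      rw [Derivation.leibniz, hnegd, Derivation.leibniz, h _ hmj2, h _ hmj2']
      simp only [hb, smul_eq_mul, mul_zero, add_zero]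
      rw [show m - (j + 1) = m - j - 1 from by omega,
        show m + (j + 1) - 1 = m + j from by omega]
      ring
    have htop : d ((-1 : MvPolynomial ℕ ℂ) ^ (m - 1) * (x (m - (m - 1)) * x (m + (m - 1))))
        = b (m - 1) := by
      have e1 : m - (m - 1) = 1 := by omega
      have e2 : 2 ≤ m + (m - 1) := by omega
      rw [e1, Derivation.leibniz, hnegd, Derivation.leibniz, h _ e2, h1]
      simp only [hb, smul_eq_mul, mul_zero, add_zero, smul_zero, zero_add]
      rw [e1]
    have hsum : ∑ j ∈ Finset.Ico 1 m, d ((-1 : MvPolynomial ℕ ℂ) ^ j * (x (m - j) * x (m + j)))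
        = b 1 := by
      have hm' : m = (m - 1) + 1 := by omega
      rw [hm', Finset.sum_Ico_succ_top (by omega), ← hm']
      rw [Finset.sum_congr rfl hterm, htop]
      have htel : ∑ j ∈ Finset.Ico 1 (m - 1), (b j - b (j + 1)) = b 1 - b (m - 1) := by
        rw [Finset.sum_Ico_eq_sum_range]
        have e : ∀ i, b (1 + i) - b (1 + i + 1)
            = (fun k => b (1 + k)) i - (fun k => b (1 + k)) (i + 1) := by
          intro i; simp only [add_assoc]
        simp only [e]
        rw [Finset.sum_range_sub' (fun k => b (1 + k))]
        rw [show 1 + 0 = 1 from rfl, show 1 + (m - 1 - 1) = m - 1 from by omega]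
      rw [htel]
      ring
    rw [map_add, hdsq, Derivation.leibniz]
    have hd2 : d (2 : MvPolynomial ℕ ℂ) = 0 := by
      simpa using d.map_natCast 2
    rw [hd2, smul_zero, add_zero, map_sum, hsum]
    simp only [hb, smul_eq_mul]
    rw [show m + 1 - 1 = m from rfl]
    ring
end

section
/- The polynomial x₂³ − 3x₁x₂x₃ + 3x₁²x₄ lies in the kernel of the derivation d. -/
open MvPolynomial Finset

theorem d_g_002_eq_zero (d : Derivation ℂ (MvPolynomial ℕ ℂ) (MvPolynomial ℕ ℂ))
    (h1 : d (x 1) = 0) (h : ∀ i, 2 ≤ i → d (x i) = x (i - 1)) :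
    d (x 2 ^ 3 - 3 * x 1 * x 2 * x 3 + 3 * x 1 ^ 2 * x 4) = 0 := by
  have h2 : d (x 2) = x 1 := h 2 (by norm_num)
  have h3 : d (x 3) = x 2 := h 3 (by norm_num)
  have h4 : d (x 4) = x 3 := h 4 (by norm_num)
  have h0 : d 3 = 0 := by
    rw [show (3 : MvPolynomial ℕ ℂ) = algebraMap ℂ _ 3 by rw [algebraMap_eq]; exact (map_ofNat C 3).symm]
    exact d.map_algebraMap 3
  simp only [map_sub, map_add, Derivation.leibniz, Derivation.leibniz_pow, h1, h2, h3, h4,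
    Derivation.leibniz_of_mul_eq_one]
  simp only [smul_eq_mul, h0, mul_zero, smul_zero, zero_mul, add_zero, mul_one]
  ring
end

section
/- The polynomial x₂x₃² − 2x₂²x₄ − x₁x₃x₄ + 5x₁x₂x₅ − 5x₁²x₆ lies in the kernel of the derivation d. -/
open MvPolynomial Finset

theorem d_g_012_eq_zero (d : Derivation ℂ (MvPolynomial ℕ ℂ) (MvPolynomial ℕ ℂ))
    (h1 : d (x 1) = 0) (h : ∀ i, 2 ≤ i → d (x i) = x (i - 1)) :
    d (x 2 * x 3 ^ 2 - 2 * x 2 ^ 2 * x 4 - x 1 * x 3 * x 4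
        + 5 * x 1 * x 2 * x 5 - 5 * x 1 ^ 2 * x 6) = 0 := by
  have h2 := h 2 (by norm_num)
  have h3 := h 3 (by norm_num)
  have h4 := h 4 (by norm_num)
  have h5 := h 5 (by norm_num)
  have h6 := h 6 (by norm_num)
  norm_num at h2 h3 h4 h5 h6
  simp only [map_sub, map_add, Derivation.leibniz, Derivation.leibniz_pow,
    Derivation.map_smul, map_mul, Derivation.leibniz_of_mul_eq_one,
    smul_eq_mul, h1, h2, h3, h4, h5, h6]
  have d5 : d (5 : MvPolynomial ℕ ℂ) = 0 := by
    rw [show (5 : MvPolynomial ℕ ℂ) = algebraMap ℂ _ 5 from (map_ofNat _ 5).symm]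
    exact Derivation.map_algebraMap d 5
  have d2 : d (2 : MvPolynomial ℕ ℂ) = 0 := by
    rw [show (2 : MvPolynomial ℕ ℂ) = algebraMap ℂ _ 2 from (map_ofNat _ 2).symm]
    exact Derivation.map_algebraMap d 2
  rw [d5, d2]
  ring
end

section
/- The polynomial x₃³ − 3x₂x₃x₄ + 3x₂²x₅ + 3x₁x₄² − 3x₁x₃x₅ − 3x₁x₂x₆ + 3x₁²x₇ lies in the kernel of the derivation d. -/
open MvPolynomial Finset

theorem d_g_003_eq_zero (d : Derivation ℂ (MvPolynomial ℕ ℂ) (MvPolynomial ℕ ℂ))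
    (h1 : d (x 1) = 0) (h : ∀ i, 2 ≤ i → d (x i) = x (i - 1)) :
    d (x 3 ^ 3 - 3 * x 2 * x 3 * x 4 + 3 * x 2 ^ 2 * x 5 + 3 * x 1 * x 4 ^ 2
        - 3 * x 1 * x 3 * x 5 - 3 * x 1 * x 2 * x 6 + 3 * x 1 ^ 2 * x 7) = 0 := by
  have h2 := h 2 (by norm_num)
  have h3 := h 3 (by norm_num)
  have h4 := h 4 (by norm_num)
  have h5 := h 5 (by norm_num)
  have h6 := h 6 (by norm_num)
  have h7 := h 7 (by norm_num)
  norm_num at h2 h3 h4 h5 h6 h7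
  have c3 : (3 : MvPolynomial ℕ ℂ) = (3 : ℂ) • 1 := by
    simp [Algebra.smul_def, map_ofNat]
  simp only [c3, smul_mul_assoc, one_mul, map_sub, map_add, Derivation.map_smul,
    Derivation.leibniz, Derivation.leibniz_pow, h1, h2, h3, h4, h5, h6, h7]
  simp only [smul_eq_C_mul, map_ofNat, smul_eq_mul]
  ring
end

section
/- The polynomial x₂⁴ − 4x₁x₂²x₃ + 2x₁²x₃² + 4x₁²x₂x₄ − 4x₁³x₅ lies in the kernel of the derivation d. -/
open MvPolynomial Finset

theorem d_g_0002_eq_zero (d : Derivation ℂ (MvPolynomial ℕ ℂ) (MvPolynomial ℕ ℂ))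
    (h1 : d (x 1) = 0) (h : ∀ i, 2 ≤ i → d (x i) = x (i - 1)) :
    d (x 2 ^ 4 - 4 * x 1 * x 2 ^ 2 * x 3 + 2 * x 1 ^ 2 * x 3 ^ 2
        + 4 * x 1 ^ 2 * x 2 * x 4 - 4 * x 1 ^ 3 * x 5) = 0 := by
  have h2 := h 2 (by norm_num)
  have h3 := h 3 (by norm_num)
  have h4 := h 4 (by norm_num)
  have h5 := h 5 (by norm_num)
  norm_num at h2 h3 h4 h5
  simp only [map_sub, map_add, Derivation.leibniz, Derivation.leibniz_pow, map_mul, map_ofNat,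
    Derivation.map_smul, smul_eq_mul, h1, h2, h3, h4, h5]
  have hd4 : d 4 = 0 := by
    have : (4 : MvPolynomial ℕ ℂ) = algebraMap ℂ _ 4 := by simp [algebraMap_eq, map_ofNat]
    rw [this, Derivation.map_algebraMap]
  have hd2 : d 2 = 0 := by
    have : (2 : MvPolynomial ℕ ℂ) = algebraMap ℂ _ 2 := by simp [algebraMap_eq, map_ofNat]
    rw [this, Derivation.map_algebraMap]
  rw [hd2, hd4]
  ring
end

section
/- The polynomial x₂⁵ − 5x₁x₂³x₃ + 5x₁²x₂x₃² + 5x₁²x₂²x₄ − 5x₁³x₃x₄ − 5x₁³x₂x₅ + 5x₁⁴x₆ lies in the kernel of the derivation d. -/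
open MvPolynomial Finset

theorem d_g_00002_eq_zero (d : Derivation ℂ (MvPolynomial ℕ ℂ) (MvPolynomial ℕ ℂ))
    (h1 : d (x 1) = 0) (h : ∀ i, 2 ≤ i → d (x i) = x (i - 1)) :
    d (x 2 ^ 5 - 5 * x 1 * x 2 ^ 3 * x 3 + 5 * x 1 ^ 2 * x 2 * x 3 ^ 2
        + 5 * x 1 ^ 2 * x 2 ^ 2 * x 4 - 5 * x 1 ^ 3 * x 3 * x 4
        - 5 * x 1 ^ 3 * x 2 * x 5 + 5 * x 1 ^ 4 * x 6) = 0 := by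
  have h2 := h 2 (by norm_num)
  have h3 := h 3 (by norm_num)
  have h4 := h 4 (by norm_num)
  have h5 := h 5 (by norm_num)
  have h6 := h 6 (by norm_num)
  norm_num at h2 h3 h4 h5 h6
  have hd5 : d 5 = 0 := by
    rw [show (5 : MvPolynomial ℕ ℂ) = algebraMap ℂ _ 5 by simp [algebraMap_eq, map_ofNat]]
    exact d.map_algebraMap 5
  simp only [map_sub, map_add, Derivation.leibniz, Derivation.leibniz_pow, map_ofNat,
    Derivation.map_smul_of_tower, h1, h2, h3, h4, h5, h6, hd5, smul_eq_mul]
  ring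
end

section
/- In ℂ[x₁, x₂, …], the degree-12 relation g_{(0,2)}³ − g_{(0,0,2)}² = 3·g_{(1)}²·g_{(0,2)}·g_{(0,3)} − 2·g_{(1)}³·g_{(0,0,3)} − 3·g_{(1)}⁴·g_{(0,4)} holds. -/
open MvPolynomial

noncomputable def g1 : MvPolynomial ℕ ℂ := x 1
noncomputable def g02 : MvPolynomial ℕ ℂ := x 2 ^ 2 - 2 * x 1 * x 3
noncomputable def g03 : MvPolynomial ℕ ℂ := x 3 ^ 2 - 2 * x 2 * x 4 + 2 * x 1 * x 5
noncomputable def g04 : MvPolynomial ℕ ℂ :=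
  x 4 ^ 2 - 2 * x 3 * x 5 + 2 * x 2 * x 6 - 2 * x 1 * x 7
noncomputable def g002 : MvPolynomial ℕ ℂ := x 2 ^ 3 - 3 * x 1 * x 2 * x 3 + 3 * x 1 ^ 2 * x 4
noncomputable def g003 : MvPolynomial ℕ ℂ :=
  x 3 ^ 3 - 3 * x 2 * x 3 * x 4 + 3 * x 2 ^ 2 * x 5 + 3 * x 1 * x 4 ^ 2
    - 3 * x 1 * x 3 * x 5 - 3 * x 1 * x 2 * x 6 + 3 * x 1 ^ 2 * x 7

/-- The degree-12 relation
g_{(0,2)}³ − g_{(0,0,2)}² = 3 g_{(1)}² g_{(0,2)} g_{(0,3)} − 2 g_{(1)}³ g_{(0,0,3)} − 3 g_{(1)}⁴ g_{(0,4)}. -/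
theorem degree12_relation_two :
    g02 ^ 3 - g002 ^ 2
      = 3 * g1 ^ 2 * g02 * g03 - 2 * g1 ^ 3 * g003 - 3 * g1 ^ 4 * g04 := by
  unfold g1 g02 g03 g04 g002 g003 x; ring
end

section
/- In ℂ[x₁, x₂, …], the degree-12 relation g_{(0,2)}·g_{(0,1,2)} − g_{(0,3)}·g_{(0,0,2)} = g_{(1)}·g_{(0,0,1,2)} + g_{(1)}²·g_{(0,2,2)} holds. -/
open MvPolynomial

noncomputable def g012 : MvPolynomial ℕ ℂ :=
  x 2 * x 3 ^ 2 - 2 * x 2 ^ 2 * x 4 - x 1 * x 3 * x 4 + 5 * x 1 * x 2 * x 5 - 5 * x 1 ^ 2 * x 6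
noncomputable def g022 : MvPolynomial ℕ ℂ :=
  x 2 * x 4 ^ 2 - 2 * x 2 * x 3 * x 5 + 2 * x 2 ^ 2 * x 6 - x 1 * x 4 * x 5
    + 3 * x 1 * x 3 * x 6 - 7 * x 1 * x 2 * x 7 + 7 * x 1 ^ 2 * x 8
noncomputable def g0012 : MvPolynomial ℕ ℂ :=
  x 2 * x 3 ^ 3 - 3 * x 2 ^ 2 * x 3 * x 4 + 3 * x 2 ^ 3 * x 5 - x 1 * x 3 ^ 2 * x 4
    + 5 * x 1 * x 2 * x 4 ^ 2 - 2 * x 1 * x 2 * x 3 * x 5 - 7 * x 1 * x 2 ^ 2 * x 6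
    - 5 * x 1 ^ 2 * x 4 * x 5 + 7 * x 1 ^ 2 * x 3 * x 6 + 7 * x 1 ^ 2 * x 2 * x 7
    - 7 * x 1 ^ 3 * x 8

/-- The degree-12 relation
g_{(0,2)}·g_{(0,1,2)} − g_{(0,3)}·g_{(0,0,2)} = g_{(1)}·g_{(0,0,1,2)} + g_{(1)}²·g_{(0,2,2)}. -/
theorem degree12_relation_one :
    g02 * g012 - g03 * g002 = g1 * g0012 + g1 ^ 2 * g022 := by
  unfold g02 g012 g03 g002 g1 g0012 g022 x; ring
end

section
/- Fix ℓ ≥ 1 and integers (or elements of any commutative ring) k₁, …, k_ℓ, and for n ≥ ℓ set P_n = ∑ k₁^{i₁}⋯k_ℓ^{i_ℓ} x_{i₁}⋯x_{i_ℓ}, the sum over all tuples (i₁,…,i_ℓ) of positive integers with i₁+⋯+i_ℓ = n (and P_n = 0 for n < ℓ). Then d(P_n) = (k₁ + ⋯ + k_ℓ)·P_{n−1}, where d is the derivation of ℂ[x₁, x₂, …] with d(x₁)=0 and d(xᵢ)=xᵢ₋₁ for i ≥ 2, extended coefficientwise. -/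
/-!
Write `P_n` as the sum, over tuples `i` of positive integers with `∑ i = n`, of the products
`∏ⱼ kⱼ^{iⱼ} x_{iⱼ}`. By the Leibniz rule, `d` lowers one index `iⱼ ≥ 2` of such a product by one
and multiplies it by `kⱼ` (the factors with `iⱼ = 1` are killed). For fixed `j`, subtracting `1`
from the `j`-th entry is a bijection from the tuples of sum `n` with `iⱼ ≥ 2` onto all tuples of
sum `n - 1`, so the terms lowered at `j` add up to `kⱼ P_{n-1}`.
-/

open MvPolynomial

/-- `P ℓ k n = ∑ k₁^{i₁}⋯k_ℓ^{i_ℓ} x_{i₁}⋯x_{i_ℓ}`, summed over tuples of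
positive integers `(i₁,…,i_ℓ)` with `i₁+⋯+i_ℓ = n` (so `P ℓ k n = 0` if `n < ℓ`). -/
noncomputable def P (ℓ : ℕ) (k : Fin ℓ → ℂ) (n : ℕ) : MvPolynomial ℕ ℂ :=
  ∑ i ∈ Finset.filter (fun i : Fin ℓ → ℕ => (∀ j, 1 ≤ i j) ∧ ∑ j, i j = n)
      (Fintype.piFinset fun _ => Finset.range (n + 1)),
    C (∏ j, k j ^ i j) * ∏ j, x (i j)

open Finset

theorem Derivation.leibniz_prod {R A M ι : Type*} [CommSemiring R] [CommSemiring A]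
    [AddCommMonoid M] [Algebra R A] [Module A M] [Module R M] [DecidableEq ι]
    (D : Derivation R A M) (s : Finset ι) (f : ι → A) :
    D (∏ j ∈ s, f j) = ∑ j ∈ s, (∏ j' ∈ s.erase j, f j') • D (f j) := by
  induction s using Finset.induction with
  | empty => simp
  | insert a s ha ih =>
    rw [prod_insert ha, leibniz, ih, sum_insert ha, erase_insert ha, smul_sum, add_comm]
    congr 1
    refine sum_congr rfl fun j hj => ?_
    rw [erase_insert_of_ne (ne_of_mem_of_not_mem hj ha).symm, prod_insert (mt mem_of_mem_erase ha),
      smul_smul]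

def positiveTuples (ι : Type*) [Fintype ι] [DecidableEq ι] (n : ℕ) : Finset (ι → ℕ) :=
  filter (fun i : ι → ℕ => (∀ j, 1 ≤ i j) ∧ ∑ j, i j = n)
    (Fintype.piFinset fun _ => range (n + 1))

section PositiveTuples

variable {ι : Type*} [Fintype ι] [DecidableEq ι]

theorem mem_positiveTuples {n : ℕ} {i : ι → ℕ} :
    i ∈ positiveTuples ι n ↔ (∀ j, 1 ≤ i j) ∧ ∑ j, i j = n := by
  simp only [positiveTuples, mem_filter, Fintype.mem_piFinset, mem_range, and_iff_right_iff_imp]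
  rintro ⟨-, rfl⟩ j
  exact Nat.lt_succ_of_le (single_le_sum (fun _ _ => Nat.zero_le _) (mem_univ j))

theorem sum_pi_single_add {M : Type*} [AddCommMonoid M] (j : ι) (a : M) (f : ι → M) :
    ∑ j', (Pi.single j a + f : ι → M) j' = a + ∑ j', f j' := by
  simp [sum_add_distrib]

theorem filter_positiveTuples_two_le (n : ℕ) (j : ι) :
    (positiveTuples ι n).filter (fun i => 2 ≤ i j) =
      (positiveTuples ι (n - 1)).map (addLeftEmbedding (Pi.single j 1)) := by
  ext i
  simp only [mem_filter, mem_map, mem_positiveTuples, addLeftEmbedding_apply]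
  constructor
  · rintro ⟨⟨hpos, hsum⟩, hj⟩
    have hle : Pi.single j 1 ≤ i := fun j' => by
      rcases eq_or_ne j' j with rfl | hne <;> simp [*]
    refine ⟨i - Pi.single j 1, ⟨fun j' => ?_, ?_⟩, add_tsub_cancel_of_le hle⟩
    · rcases eq_or_ne j' j with rfl | hne
      · simp only [Pi.sub_apply, Pi.single_eq_same]; omega
      · simp [hne, hpos j']
    · rw [← add_tsub_cancel_of_le hle, sum_pi_single_add] at hsum
      omega
  · rintro ⟨i', ⟨hpos, hsum⟩, rfl⟩
    have hn : 1 ≤ n - 1 :=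
      hsum ▸ (hpos j).trans (single_le_sum (fun _ _ => Nat.zero_le _) (mem_univ j))
    refine ⟨⟨fun j' => ?_, ?_⟩, ?_⟩
    · simp only [Pi.add_apply]; have := hpos j'; omega
    · rw [sum_pi_single_add]; omega
    · simp only [Pi.add_apply, Pi.single_eq_same]; have := hpos j; omega

theorem sum_filter_positiveTuples_two_le {M : Type*} [AddCommMonoid M] (n : ℕ) (j : ι)
    (f : (ι → ℕ) → M) :
    ∑ i ∈ (positiveTuples ι n).filter (fun i => 2 ≤ i j), f (i - Pi.single j 1) =
      ∑ i ∈ positiveTuples ι (n - 1), f i := by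
  rw [filter_positiveTuples_two_le, sum_map]
  simp only [addLeftEmbedding_apply, add_tsub_cancel_left]

end PositiveTuples

noncomputable def scaledX (c : ℂ) (a : ℕ) : MvPolynomial ℕ ℂ := C (c ^ a) * x a

theorem P_eq_sum_prod_scaledX (ℓ : ℕ) (k : Fin ℓ → ℂ) (n : ℕ) :
    P ℓ k n = ∑ i ∈ positiveTuples (Fin ℓ) n, ∏ j, scaledX (k j) (i j) := by
  simp only [P, positiveTuples, scaledX, prod_mul_distrib, map_prod]
  -- the two filters differ only in their `Decidable` instances
  congr

section Derivation

variable (d : Derivation ℂ (MvPolynomial ℕ ℂ) (MvPolynomial ℕ ℂ))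

/-- The case `a = 0` is covered by `h1` because `x 0 = X (0 - 1) = x 1`. -/
theorem derivation_x (h1 : d (x 1) = 0) (h : ∀ i, 2 ≤ i → d (x i) = x (i - 1)) (a : ℕ) :
    d (x a) = if 2 ≤ a then x (a - 1) else 0 := by
  split_ifs with ha
  · exact h a ha
  · obtain rfl | rfl : a = 0 ∨ a = 1 := by omega
    exacts [h1, h1]

theorem derivation_scaledX (h1 : d (x 1) = 0) (h : ∀ i, 2 ≤ i → d (x i) = x (i - 1))
    (c : ℂ) (a : ℕ) : d (scaledX c a) = if 2 ≤ a then C c * scaledX c (a - 1) else 0 := by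
  rw [scaledX, ← smul_eq_C_mul, d.map_smul, derivation_x d h1 h]
  split_ifs with ha
  · rw [smul_eq_C_mul, scaledX, ← mul_assoc, ← map_mul, ← pow_succ', Nat.sub_add_cancel (by omega)]
  · exact smul_zero _

theorem derivation_prod_scaledX (h1 : d (x 1) = 0) (h : ∀ i, 2 ≤ i → d (x i) = x (i - 1))
    {ι : Type*} [Fintype ι] [DecidableEq ι] (k : ι → ℂ) (i : ι → ℕ) :
    d (∏ j, scaledX (k j) (i j)) =
      ∑ j, if 2 ≤ i j
        then C (k j) * ∏ j', scaledX (k j') ((i - Pi.single j 1 : ι → ℕ) j') else 0 := by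
  rw [d.leibniz_prod]
  refine sum_congr rfl fun j _ => ?_
  rw [derivation_scaledX d h1 h]
  split_ifs
  · rw [← mul_prod_erase univ _ (mem_univ j), smul_eq_mul]
    have hoff : ∀ j' ∈ univ.erase j,
        scaledX (k j') ((i - Pi.single j 1 : ι → ℕ) j') = scaledX (k j') (i j') :=
      fun j' hj' => by simp [ne_of_mem_erase hj']
    rw [prod_congr rfl hoff]
    simp only [Pi.sub_apply, Pi.single_eq_same]
    ring
  · exact smul_zero _

end Derivation

theorem d_P_eq_general (d : Derivation ℂ (MvPolynomial ℕ ℂ) (MvPolynomial ℕ ℂ))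
    (h1 : d (x 1) = 0) (h : ∀ i, 2 ≤ i → d (x i) = x (i - 1))
    (ℓ : ℕ) (k : Fin ℓ → ℂ) (n : ℕ) :
    d (P ℓ k n) = C (∑ j, k j) * P ℓ k (n - 1) := by
  simp only [P_eq_sum_prod_scaledX, map_sum, derivation_prod_scaledX d h1 h, sum_mul]
  rw [sum_comm]
  refine sum_congr rfl fun j _ => ?_
  rw [← sum_filter, mul_sum,
    sum_filter_positiveTuples_two_le n j fun i => C (k j) * ∏ j', scaledX (k j') (i j')]

/-- `d(P_n) = (k₁ + ⋯ + k_ℓ) · P_{n−1}`. -/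
theorem d_P_eq (d : Derivation ℂ (MvPolynomial ℕ ℂ) (MvPolynomial ℕ ℂ))
    (h1 : d (x 1) = 0) (h : ∀ i, 2 ≤ i → d (x i) = x (i - 1))
    (ℓ : ℕ) (hℓ : 1 ≤ ℓ) (k : Fin ℓ → ℂ) (n : ℕ) (hn : ℓ ≤ n) :
    d (P ℓ k n) = C (∑ j, k j) * P ℓ k (n - 1) :=
  d_P_eq_general d h1 h ℓ k n
end

section
/- The space of polynomials f ∈ ℂ[x₁, x₂, …] that are homogeneous of weighted degree 4 (where xᵢ has degree i) and satisfy d(f) = 0 is exactly the 2-dimensional span of x₁⁴ and x₂² − 2x₁x₃. -/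
open MvPolynomial

/-- The weight function: the variable `x i = X (i-1)` has weighted degree `i`. -/
def w : ℕ → ℕ := fun n => n + 1


lemma classify (m : ℕ →₀ ℕ) (hm : Finsupp.weight w m = 4) :
    m = Finsupp.single 3 1 ∨ m = Finsupp.single 0 1 + Finsupp.single 2 1 ∨
    m = Finsupp.single 1 2 ∨ m = Finsupp.single 0 2 + Finsupp.single 1 1 ∨
    m = Finsupp.single 0 4 := by
  have h4 : ∀ i, 4 ≤ i → m i = 0 := by
    intro i hi
    by_contra hne
    have := Finsupp.le_weight_of_ne_zero' w hne
    rw [hm] at this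
    simp only [w] at this
    omega
  have hsupp : m.support ⊆ Finset.range 4 := by
    intro i hi
    simp only [Finset.mem_range]
    by_contra hlt
    exact Finsupp.mem_support_iff.mp hi (h4 i (by omega))
  have hsum : m 0 * 1 + m 1 * 2 + m 2 * 3 + m 3 * 4 = 4 := by
    have := hm
    rw [Finsupp.weight_apply, Finsupp.sum_of_support_subset m hsupp _ (by simp)] at this
    simpa [w, Finset.sum_range_succ, mul_comm] using this
  have hcases : (m 0 = 0 ∧ m 1 = 0 ∧ m 2 = 0 ∧ m 3 = 1) ∨
      (m 0 = 1 ∧ m 1 = 0 ∧ m 2 = 1 ∧ m 3 = 0) ∨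
      (m 0 = 0 ∧ m 1 = 2 ∧ m 2 = 0 ∧ m 3 = 0) ∨
      (m 0 = 2 ∧ m 1 = 1 ∧ m 2 = 0 ∧ m 3 = 0) ∨
      (m 0 = 4 ∧ m 1 = 0 ∧ m 2 = 0 ∧ m 3 = 0) := by
    have b3 : m 3 ≤ 1 := by omega
    have b2 : m 2 ≤ 1 := by omega
    have b1 : m 1 ≤ 2 := by omega
    interval_cases h3 : m 3 <;> interval_cases h2 : m 2 <;> interval_cases h1 : m 1 <;> omega
  rcases hcases with ⟨a,b,c,e⟩|⟨a,b,c,e⟩|⟨a,b,c,e⟩|⟨a,b,c,e⟩|⟨a,b,c,e⟩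
  · left; ext i
    rcases i with _|_|_|_|i <;> simp_all [Finsupp.single_apply]
  · right; left; ext i
    rcases i with _|_|_|_|i <;> simp_all [Finsupp.single_apply]
  · right; right; left; ext i
    rcases i with _|_|_|_|i <;> simp_all [Finsupp.single_apply]
  · right; right; right; left; ext i
    rcases i with _|_|_|_|i <;> simp_all [Finsupp.single_apply]
  · right; right; right; right; ext i
    rcases i with _|_|_|_|i <;> simp_all [Finsupp.single_apply]

noncomputable def m1 : ℕ →₀ ℕ := Finsupp.single 3 1
noncomputable def m2 : ℕ →₀ ℕ := Finsupp.single 0 1 + Finsupp.single 2 1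
noncomputable def m3 : ℕ →₀ ℕ := Finsupp.single 1 2
noncomputable def m4 : ℕ →₀ ℕ := Finsupp.single 0 2 + Finsupp.single 1 1
noncomputable def m5 : ℕ →₀ ℕ := Finsupp.single 0 4

lemma fne {a b : ℕ →₀ ℕ} (i : ℕ) (h : a i ≠ b i) : a ≠ b := fun e => h (by rw [e])

lemma ne12 : m1 ≠ m2 := fne 3 (by simp [m1, m2, Finsupp.single_apply])
lemma ne13 : m1 ≠ m3 := fne 3 (by simp [m1, m3, Finsupp.single_apply])
lemma ne14 : m1 ≠ m4 := fne 3 (by simp [m1, m4, Finsupp.single_apply])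
lemma ne15 : m1 ≠ m5 := fne 3 (by simp [m1, m5, Finsupp.single_apply])
lemma ne23 : m2 ≠ m3 := fne 0 (by simp [m2, m3, Finsupp.single_apply])
lemma ne24 : m2 ≠ m4 := fne 0 (by simp [m2, m4, Finsupp.single_apply])
lemma ne25 : m2 ≠ m5 := fne 0 (by simp [m2, m5, Finsupp.single_apply])
lemma ne34 : m3 ≠ m4 := fne 0 (by simp [m3, m4, Finsupp.single_apply])
lemma ne35 : m3 ≠ m5 := fne 0 (by simp [m3, m5, Finsupp.single_apply])
lemma ne45 : m4 ≠ m5 := fne 0 (by simp [m4, m5, Finsupp.single_apply])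

lemma wm1 : Finsupp.weight w m1 = 4 := by simp [m1, Finsupp.weight_apply, Finsupp.sum_single_index, w]
lemma wm2 : Finsupp.weight w m2 = 4 := by simp [m2, map_add, Finsupp.weight_apply, Finsupp.sum_single_index, w]
lemma wm3 : Finsupp.weight w m3 = 4 := by simp [m3, Finsupp.weight_apply, Finsupp.sum_single_index, w]
lemma wm4 : Finsupp.weight w m4 = 4 := by simp [m4, map_add, Finsupp.weight_apply, Finsupp.sum_single_index, w]
lemma wm5 : Finsupp.weight w m5 = 4 := by simp [m5, Finsupp.weight_apply, Finsupp.sum_single_index, w]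

lemma classify' (m : ℕ →₀ ℕ) (hm : Finsupp.weight w m = 4) :
    m = m1 ∨ m = m2 ∨ m = m3 ∨ m = m4 ∨ m = m5 := classify m hm

lemma repr4 (f : MvPolynomial ℕ ℂ) (hf : f.IsWeightedHomogeneous w 4) :
    f = monomial m1 (coeff m1 f) + monomial m2 (coeff m2 f) + monomial m3 (coeff m3 f)
      + monomial m4 (coeff m4 f) + monomial m5 (coeff m5 f) := by
  ext m
  simp only [coeff_add, coeff_monomial]
  by_cases hm : Finsupp.weight w m = 4
  · rcases classify' m hm with rfl|rfl|rfl|rfl|rfl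
    · rw [if_pos rfl, if_neg (Ne.symm ne12), if_neg (Ne.symm ne13), if_neg (Ne.symm ne14), if_neg (Ne.symm ne15)]; ring
    · rw [if_neg ne12, if_pos rfl, if_neg (Ne.symm ne23), if_neg (Ne.symm ne24), if_neg (Ne.symm ne25)]; ring
    · rw [if_neg ne13, if_neg ne23, if_pos rfl, if_neg (Ne.symm ne34), if_neg (Ne.symm ne35)]; ring
    · rw [if_neg ne14, if_neg ne24, if_neg ne34, if_pos rfl, if_neg (Ne.symm ne45)]; ring
    · rw [if_neg ne15, if_neg ne25, if_neg ne35, if_neg ne45, if_pos rfl]; ring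
  · have h0 : coeff m f = 0 := by
      by_contra hc; exact hm (hf hc)
    rw [h0, if_neg (fun e : m1 = m => hm (by rw [← e]; exact wm1)),
      if_neg (fun e : m2 = m => hm (by rw [← e]; exact wm2)),
      if_neg (fun e : m3 = m => hm (by rw [← e]; exact wm3)),
      if_neg (fun e : m4 = m => hm (by rw [← e]; exact wm4)),
      if_neg (fun e : m5 = m => hm (by rw [← e]; exact wm5))]
    ring

lemma Xm (n : ℕ) : (X n : MvPolynomial ℕ ℂ) = monomial (Finsupp.single n 1) 1 := by
  rw [← X_pow_eq_monomial, pow_one]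

lemma M1 (a : ℂ) : monomial m1 a = C a * X 3 := by
  rw [m1, ← C_mul_X_pow_eq_monomial, pow_one]

lemma M3 (a : ℂ) : monomial m3 a = C a * X 1 ^ 2 := by
  rw [m3, ← C_mul_X_pow_eq_monomial]

lemma M5 (a : ℂ) : monomial m5 a = C a * X 0 ^ 4 := by
  rw [m5, ← C_mul_X_pow_eq_monomial]

lemma M2 (a : ℂ) : monomial m2 a = C a * (X 0 * X 2) := by
  rw [m2, Xm 0, Xm 2, monomial_mul, C_mul_monomial]
  simp

lemma M4 (a : ℂ) : monomial m4 a = C a * (X 0 ^ 2 * X 1) := by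
  rw [m4, X_pow_eq_monomial, Xm 1, monomial_mul, C_mul_monomial]
  simp

lemma hu : x 1 ^ 4 = monomial m5 (1 : ℂ) := by
  show (X 0 : MvPolynomial ℕ ℂ) ^ 4 = _
  rw [m5, X_pow_eq_monomial]

lemma hv : x 2 ^ 2 - 2 * x 1 * x 3 = monomial m3 (1 : ℂ) - monomial m2 2 := by
  show (X 1 : MvPolynomial ℕ ℂ) ^ 2 - 2 * X 0 * X 2 = _
  rw [M3, M2, map_one, show ((2:MvPolynomial ℕ ℂ)) = C (2:ℂ) from (map_ofNat C 2).symm]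
  ring

noncomputable def n1 : ℕ →₀ ℕ := Finsupp.single 2 1
noncomputable def n2 : ℕ →₀ ℕ := Finsupp.single 0 1 + Finsupp.single 1 1
noncomputable def n3 : ℕ →₀ ℕ := Finsupp.single 0 3

lemma ne12' : n1 ≠ n2 := fne 2 (by simp [n1, n2, Finsupp.single_apply])
lemma ne13' : n1 ≠ n3 := fne 2 (by simp [n1, n3, Finsupp.single_apply])
lemma ne23' : n2 ≠ n3 := fne 0 (by simp [n2, n3, Finsupp.single_apply])

lemma N1 (a : ℂ) : monomial n1 a = C a * X 2 := by
  rw [n1, ← C_mul_X_pow_eq_monomial, pow_one]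

lemma N3 (a : ℂ) : monomial n3 a = C a * X 0 ^ 3 := by
  rw [n3, ← C_mul_X_pow_eq_monomial]

lemma N2 (a : ℂ) : monomial n2 a = C a * (X 0 * X 1) := by
  rw [n2, Xm 0, Xm 1, monomial_mul, C_mul_monomial]
  simp



/-- The weighted-degree-4 invariant polynomials form exactly the 2-dimensional
span of `x₁⁴` and `x₂² − 2x₁x₃`. -/
theorem weighted_degree_four_invariants
    (d : Derivation ℂ (MvPolynomial ℕ ℂ) (MvPolynomial ℕ ℂ))
    (h1 : d (x 1) = 0) (h : ∀ i, 2 ≤ i → d (x i) = x (i - 1)) :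
    (∀ f : MvPolynomial ℕ ℂ,
        (f.IsWeightedHomogeneous w 4 ∧ d f = 0) ↔
          f ∈ Submodule.span ℂ ({x 1 ^ 4, x 2 ^ 2 - 2 * x 1 * x 3} :
            Set (MvPolynomial ℕ ℂ))) ∧
    LinearIndependent ℂ ![x 1 ^ 4, x 2 ^ 2 - 2 * x 1 * x 3] := by
  have hX0 : d (X 0) = 0 := h1
  have hX1 : d (X 1) = X 0 := h 2 (by norm_num)
  have hX2 : d (X 2) = X 1 := h 3 (by norm_num)
  have hX3 : d (X 3) = X 2 := h 4 (by norm_num)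
  have hC : ∀ a : ℂ, d (C a) = 0 := fun a => d.map_algebraMap a
  have h2 : d 2 = 0 := by
    rw [show (2 : MvPolynomial ℕ ℂ) = C (2:ℂ) from (map_ofNat C 2).symm]
    exact hC 2
  have hdu : d (x 1 ^ 4) = 0 := by
    rw [hu, M5]
    simp only [Derivation.leibniz, Derivation.leibniz_pow, hX0, hC, smul_zero, zero_add,
      smul_eq_mul, mul_zero, add_zero, map_one, one_mul]
  have hdv : d (x 2 ^ 2 - 2 * x 1 * x 3) = 0 := by
    rw [hv, M3, M2]
    simp only [map_sub, Derivation.leibniz, Derivation.leibniz_pow, hX0, hX1, hX2, hC,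
      h2, smul_eq_mul, mul_zero, zero_mul, add_zero, zero_add, smul_zero, mul_one, map_one,
      map_ofNat, one_mul]
    ring
  constructor
  · intro f
    constructor
    · rintro ⟨hf, hd⟩
      have hrepr := repr4 f hf
      set a := coeff m1 f with ha
      set b := coeff m2 f with hb
      set c := coeff m3 f with hcc
      set e := coeff m4 f with he
      set g := coeff m5 f with hg
      have hdf : d f = monomial n1 a + monomial n2 (b + 2*c) + monomial n3 e := by
        conv_lhs => rw [hrepr]
        rw [M1, M2, M3, M4, M5, N1, N2, N3]
        simp only [map_add, Derivation.leibniz, Derivation.leibniz_pow, hX0, hX1, hX2, hX3, hC,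
          smul_eq_mul, mul_zero, zero_mul, add_zero, zero_add, smul_zero, mul_one, map_mul,
          map_ofNat]
        ring
      rw [hd] at hdf
      have hA : a = 0 := by
        have h0' := congrArg (coeff n1) hdf.symm
        rw [coeff_add, coeff_add, coeff_monomial, coeff_monomial, coeff_monomial, if_pos rfl,
          if_neg (Ne.symm ne12'), if_neg (Ne.symm ne13')] at h0'
        simpa using h0'
      have hBC : b + 2*c = 0 := by
        have h0' := congrArg (coeff n2) hdf.symm
        rw [coeff_add, coeff_add, coeff_monomial, coeff_monomial, coeff_monomial, if_pos rfl,
          if_neg ne12', if_neg (Ne.symm ne23')] at h0'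
        simpa using h0'
      have hE : e = 0 := by
        have h0' := congrArg (coeff n3) hdf.symm
        rw [coeff_add, coeff_add, coeff_monomial, coeff_monomial, coeff_monomial, if_pos rfl,
          if_neg ne13', if_neg ne23'] at h0'
        simpa using h0'
      have hB : b = -(2*c) := by linear_combination hBC
      rw [Submodule.mem_span_pair]
      refine ⟨g, c, ?_⟩
      rw [hu, hv, hrepr, hA, hE, hB, smul_eq_C_mul, smul_eq_C_mul]
      simp only [M1, M2, M3, M4, M5, map_zero, map_neg, map_mul, map_ofNat, map_one]
      ring
    · intro hf
      obtain ⟨s, t, rfl⟩ := Submodule.mem_span_pair.mp hf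
      constructor
      · have hmem : s • (x 1 ^ 4) + t • (x 2 ^ 2 - 2 * x 1 * x 3) ∈
            weightedHomogeneousSubmodule ℂ w 4 := by
          apply Submodule.add_mem
          · apply Submodule.smul_mem
            rw [hu]
            exact isWeightedHomogeneous_monomial w m5 1 wm5
          · apply Submodule.smul_mem
            rw [hv]
            exact Submodule.sub_mem _ (isWeightedHomogeneous_monomial w m3 1 wm3)
              (isWeightedHomogeneous_monomial w m2 2 wm2)
        exact hmem
      · rw [map_add, Derivation.map_smul, Derivation.map_smul, hdu, hdv, smul_zero, smul_zero,
          add_zero]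
  · rw [LinearIndependent.pair_iff]
    intro s t hst
    constructor
    · have h0' := congrArg (coeff m5) hst
      rw [coeff_add, coeff_smul, coeff_smul, hu, hv, coeff_sub, coeff_monomial, coeff_monomial,
        coeff_monomial, if_pos rfl, if_neg ne35, if_neg ne25] at h0'
      simpa using h0'
    · have h0' := congrArg (coeff m3) hst
      rw [coeff_add, coeff_smul, coeff_smul, hu, hv, coeff_sub, coeff_monomial, coeff_monomial,
        coeff_monomial, if_neg (Ne.symm ne35), if_pos rfl, if_neg ne23] at h0'
      simpa using h0'
end

section
/- Let f ∈ ℂ[x₁, x₂, …] be a polynomial all of whose monomials have length ℓ ≥ 1 (length = number of variable factors with multiplicity), and suppose d(f) = 0. Then for every i ≥ 1, d(δⁱ f) = i·ℓ·δ^{i−1} f; consequently the formal series ∑_{i≥0} δⁱf/(i!·ℓⁱ) is fixed coefficientwise by d, i.e. d applied to the i-th term equals the (i−1)-st term. -/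
open MvPolynomial

/-!
The commutator `E = ⁅d, δ⁆` fixes every variable, so it is the Euler derivation and multiplies
length-`ℓ` polynomials by `ℓ`. Since `δ` sends variables to length-one polynomials, `E` commutes
with `δ`, hence every `δⁿ f` is again an `E`-eigenvector of eigenvalue `ℓ`. Then
`d δⁿ⁺¹ f = δ d δⁿ f + E δⁿ f`, and induction from `d f = 0` gives `d δⁿ⁺¹ f = (n + 1) ℓ δⁿ f`.
-/

theorem Module.End.apply_iterate_succ_of_commute_lie {R M : Type*} [Semiring R]
    [AddCommGroup M] [Module R M] (d δ : Module.End R M) (hcomm : Commute ⁅d, δ⁆ δ)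
    {ℓ : ℕ} {f : M} (hE : ⁅d, δ⁆ f = ℓ • f) (hf : d f = 0) (n : ℕ) :
    d (δ^[n + 1] f) = ((n + 1) * ℓ) • δ^[n] f := by
  have hEδ : ∀ v, d (δ v) = δ (d v) + ⁅d, δ⁆ v := fun v => by simp [Ring.lie_def]
  have hEn : ∀ n, ⁅d, δ⁆ (δ^[n] f) = ℓ • δ^[n] f := fun n => by
    rw [← Module.End.pow_apply, ← Module.End.mul_apply, (hcomm.pow_right n).eq,
      Module.End.mul_apply, hE, map_nsmul]
  induction n with
  | zero => simp [hEδ, hf, hE]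
  | succ n ih =>
    rw [Function.iterate_succ_apply', hEδ, ih, map_nsmul, ← Function.iterate_succ_apply' δ,
      hEn, ← add_nsmul]
    congr 1
    ring

theorem Derivation.apply_iterate_succ_of_lie_lie_eq_zero {R A : Type*} [CommRing R] [CommRing A]
    [Algebra R A] (d δ : Derivation R A A) (hcomm : ⁅⁅d, δ⁆, δ⁆ = 0) {ℓ : ℕ} {f : A}
    (hE : ⁅d, δ⁆ f = ℓ • f) (hf : d f = 0) (n : ℕ) :
    d (δ^[n + 1] f) = ((n + 1) * ℓ) • δ^[n] f := by
  refine Module.End.apply_iterate_succ_of_commute_lie (d : Module.End R A) δ ?_ ?_ hf n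
  · rw [commute_iff_lie_eq, ← commutator_coe_linear_map, ← commutator_coe_linear_map, hcomm]
    rfl
  · rwa [← commutator_coe_linear_map]

namespace MvPolynomial

variable {σ R : Type*}

theorem derivation_monomial_of_X_eq [CommSemiring R]
    (D : Derivation R (MvPolynomial σ R) (MvPolynomial σ R)) (hD : ∀ i, D (X i) = X i)
    (s : σ →₀ ℕ) (r : R) : D (monomial s r) = s.degree • monomial s r := by
  induction s using Finsupp.induction with
  | zero => simp [monomial_zero']
  | single_add i e s _ he ih =>
    have hpow : D (X i ^ e) = e • X i ^ e := by
      rw [D.leibniz_pow, hD, smul_eq_mul, pow_sub_one_mul he]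
    rw [monomial_single_add, D.leibniz, ih, hpow, map_add, Finsupp.degree_single]
    simp only [smul_eq_mul, nsmul_eq_mul]
    push_cast
    ring

theorem IsHomogeneous.derivation_eq_nsmul [CommSemiring R]
    {D : Derivation R (MvPolynomial σ R) (MvPolynomial σ R)} (hD : ∀ i, D (X i) = X i)
    {φ : MvPolynomial σ R} {n : ℕ} (hφ : φ.IsHomogeneous n) : D φ = n • φ := by
  conv_lhs => rw [φ.as_sum]
  conv_rhs => rw [φ.as_sum, Finset.smul_sum]
  rw [map_sum]
  refine Finset.sum_congr rfl fun m hm => ?_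
  rw [derivation_monomial_of_X_eq D hD, Finsupp.degree_eq_weight_one]
  exact congrArg (· • _) (hφ (mem_support_iff.1 hm))

theorem lie_eq_zero_of_isHomogeneous_X [CommRing R]
    {E δ : Derivation R (MvPolynomial σ R) (MvPolynomial σ R)} (hE : ∀ i, E (X i) = X i)
    (hδ : ∀ i, (δ (X i)).IsHomogeneous 1) : ⁅E, δ⁆ = 0 := by
  ext i
  rw [Derivation.commutator_apply, hE, (hδ i).derivation_eq_nsmul hE, one_smul, sub_self]
  rfl

end MvPolynomial

/-- If `f` is length-homogeneous of length `ℓ ≥ 1` (each monomial has `ℓ` variable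
factors counted with multiplicity) and `d f = 0`, then `d(δⁱ f) = i·ℓ·δ^{i−1} f`;
consequently the terms of the series `∑ᵢ δⁱf/(i!·ℓⁱ)` are mapped by `d` each to
the previous one. -/
theorem d_delta_iterate_of_invariant
    (d δ : Derivation ℂ (MvPolynomial ℕ ℂ) (MvPolynomial ℕ ℂ))
    (hd1 : d (x 1) = 0) (hd : ∀ i, 2 ≤ i → d (x i) = x (i - 1))
    (hδ : ∀ i, 1 ≤ i → δ (x i) = (i : MvPolynomial ℕ ℂ) * x (i + 1))
    (ℓ : ℕ) (hℓ : 1 ≤ ℓ) (f : MvPolynomial ℕ ℂ)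
    (hlen : ∀ m ∈ f.support, (m.sum fun _ e => e) = ℓ)
    (hf : d f = 0) :
    (∀ i, 1 ≤ i →
      d ((⇑δ)^[i] f) = ((i * ℓ : ℕ) : MvPolynomial ℕ ℂ) * (⇑δ)^[i - 1] f) ∧
    (∀ i, 1 ≤ i →
      d ((1 / (Nat.factorial i * ℓ ^ i : ℂ)) • (⇑δ)^[i] f)
        = (1 / (Nat.factorial (i - 1) * ℓ ^ (i - 1) : ℂ)) • (⇑δ)^[i - 1] f) := by
  have hdX : ∀ j, d (X (j + 1)) = X j := fun j => by simpa [x] using hd (j + 2) (by omega)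
  have hδX : ∀ j, δ (X j) = C ((j + 1 : ℕ) : ℂ) * X (j + 1) := fun j => by
    simpa [x] using hδ (j + 1) (by omega)
  have hdX0 : d (X 0) = 0 := hd1
  have hEX : ∀ j, ⁅d, δ⁆ (X j) = X j := by
    rintro (_ | j) <;> simp [Derivation.commutator_apply, hδX, hdX, hdX0]; ring
  have hcomm : ⁅⁅d, δ⁆, δ⁆ = 0 :=
    lie_eq_zero_of_isHomogeneous_X hEX fun j => hδX j ▸ isHomogeneous_C_mul_X _ _
  have hf_hom : f.IsHomogeneous ℓ := fun {m} hm =>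
    Finsupp.degree_eq_weight_one (R := ℕ) ▸ hlen m (mem_support_iff.2 hm)
  have key : ∀ n, d (δ^[n + 1] f) = ((n + 1) * ℓ) • δ^[n] f :=
    d.apply_iterate_succ_of_lie_lie_eq_zero δ hcomm (hf_hom.derivation_eq_nsmul hEX) hf
  refine ⟨fun i hi => ?_, fun i hi => ?_⟩
  · obtain ⟨n, rfl⟩ := Nat.exists_eq_add_of_le' hi
    rw [key, nsmul_eq_mul, Nat.add_sub_cancel]
  · obtain ⟨n, rfl⟩ := Nat.exists_eq_add_of_le' hi
    rw [d.map_smul, key, ← Nat.cast_smul_eq_nsmul ℂ, smul_smul, Nat.add_sub_cancel]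
    congr 1
    have hℓ0 : (ℓ : ℂ) ≠ 0 := by exact_mod_cast (by omega : ℓ ≠ 0)
    push_cast [Nat.factorial_succ, pow_succ]
    field_simp
end
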